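/- arXiv:1806.03099 — 4 statements merged into one kernel-verified Lean document; each statement's English description precedes it below -/
import Mathlib

section
/- Suppose there exist an integer N ≤ d+1, pairwise distinct points a_1, …, a_N ∈ ℂ and weights c_1, …, c_N > 0 such that s(j,k) = Σ_{m=1}^N c_m a_m^j conj(a_m)^k for all j,k ≤ d+1 with j+k ≤ 2d+1. Then: (a) M is normal, i.e. M*M = MM* where M* is the adjoint of M with respect to ⟨·,·⟩_L; (b) necessarily N = d+1; and (c) the quadrature extends over the whole polynomial ring: ⟨P(M)·1, Q(M)·1⟩_L = Σ_{m=1}^N c_m P(a_m) conj(Q(a_m)) for all complex polynomials P, Q ∈ ℂ[z], where P(M) is the evaluation of P at the endomorphism M and 1 is the constant polynomial 1. -/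
open Finset
open scoped BigOperators

noncomputable section

/-- Sesquilinear moment form on coefficient vectors of length `n`:
`L(p·q̄) = ∑_{j,k} p_j conj(q_k) s(j,k)`. -/
def momForm (n : ℕ) (s : ℕ → ℕ → ℂ) (p q : Fin n → ℂ) : ℂ :=
  ∑ j : Fin n, ∑ k : Fin n, p j * (starRingEnd ℂ) (q k) * s (j : ℕ) (k : ℕ)

/-- if the moments `s(j,k)` (for `j,k ≤ d+1`, `j+k ≤ 2d+1`) are represented by a
quadrature with `N ≤ d+1` distinct nodes and positive weights, then `M` is normal, `N = d+1`,
and the quadrature extends to all of `ℂ[z]` via `⟨P(M)·1, Q(M)·1⟩_L = ∑ c_m P(a_m) conj(Q(a_m))`. -/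
theorem statement3 (d : ℕ) (hd : 1 ≤ d) (s : ℕ → ℕ → ℂ)
    (hherm : ∀ j k : ℕ, j + k ≤ 2 * d + 2 → s j k = (starRingEnd ℂ) (s k j))
    (hpd : ∀ p : Fin (d + 1) → ℂ, p ≠ 0 → 0 < (momForm (d + 1) s p p).re)
    (M : Module.End ℂ (Fin (d + 1) → ℂ))
    (hM : ∀ p q : Fin (d + 1) → ℂ,
      momForm (d + 1) s (M p) q
        = ∑ j : Fin (d + 1), ∑ k : Fin (d + 1),
            p j * (starRingEnd ℂ) (q k) * s ((j : ℕ) + 1) (k : ℕ))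
    -- `Mstar` is the adjoint of `M` with respect to `⟨·,·⟩_L`
    (Mstar : Module.End ℂ (Fin (d + 1) → ℂ))
    (hMstar : ∀ p q : Fin (d + 1) → ℂ,
      momForm (d + 1) s (Mstar p) q = momForm (d + 1) s p (M q))
    (N : ℕ) (hN : N ≤ d + 1) (a : Fin N → ℂ) (ha : Function.Injective a)
    (c : Fin N → ℝ) (hc : ∀ m, 0 < c m)
    (hquad : ∀ j k : ℕ, j ≤ d + 1 → k ≤ d + 1 → j + k ≤ 2 * d + 1 →
      s j k = ∑ m, (c m : ℂ) * a m ^ j * (starRingEnd ℂ) (a m) ^ k) :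
    Mstar * M = M * Mstar ∧ N = d + 1 ∧
      ∀ P Q : Polynomial ℂ,
        momForm (d + 1) s ((Polynomial.aeval M P) (Pi.single 0 1))
            ((Polynomial.aeval M Q) (Pi.single 0 1))
          = ∑ m, (c m : ℂ) * P.eval (a m) * (starRingEnd ℂ) (Q.eval (a m)) := by
    classical
  -- evaluation map at the nodes
  let E : (Fin (d + 1) → ℂ) →ₗ[ℂ] (Fin N → ℂ) :=
    { toFun := fun p m => ∑ j : Fin (d + 1), p j * a m ^ (j : ℕ)
      map_add' := by
        intro p q; funext m
        simp [add_mul, Finset.sum_add_distrib]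
      map_smul' := by
        intro t p; funext m
        simp [Finset.mul_sum, mul_assoc] }
  have hEapp : ∀ (p : Fin (d + 1) → ℂ) (m : Fin N),
      E p m = ∑ j : Fin (d + 1), p j * a m ^ (j : ℕ) := fun p m => rfl
  -- moment form as a quadrature sum
  have hA : ∀ p q : Fin (d + 1) → ℂ,
      momForm (d + 1) s p q
        = ∑ m, (c m : ℂ) * E p m * (starRingEnd ℂ) (E q m) := by
    intro p q
    have hs : ∀ j k : Fin (d + 1), s (j : ℕ) (k : ℕ)
        = ∑ m, (c m : ℂ) * a m ^ (j : ℕ) * (starRingEnd ℂ) (a m) ^ (k : ℕ) := by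
      intro j k
      have hj := j.isLt; have hk := k.isLt
      exact hquad _ _ (by omega) (by omega) (by omega)
    have hterm : ∀ m : Fin N,
        (c m : ℂ) * E p m * (starRingEnd ℂ) (E q m)
          = ∑ j : Fin (d + 1), ∑ k : Fin (d + 1),
              p j * (starRingEnd ℂ) (q k)
                * ((c m : ℂ) * a m ^ (j : ℕ) * (starRingEnd ℂ) (a m) ^ (k : ℕ)) := by
      intro m
      rw [hEapp, hEapp, map_sum, mul_assoc, Finset.sum_mul_sum, Finset.mul_sum]
      refine Finset.sum_congr rfl fun j _ => ?_
      rw [Finset.mul_sum]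
      refine Finset.sum_congr rfl fun k _ => ?_
      simp only [map_mul, map_pow]
      ring
    unfold momForm
    simp only [hs, Finset.mul_sum]
    calc ∑ j : Fin (d + 1), ∑ k : Fin (d + 1), ∑ m,
            p j * (starRingEnd ℂ) (q k)
              * ((c m : ℂ) * a m ^ (j : ℕ) * (starRingEnd ℂ) (a m) ^ (k : ℕ))
        = ∑ j : Fin (d + 1), ∑ m, ∑ k : Fin (d + 1),
            p j * (starRingEnd ℂ) (q k)
              * ((c m : ℂ) * a m ^ (j : ℕ) * (starRingEnd ℂ) (a m) ^ (k : ℕ)) :=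
          Finset.sum_congr rfl fun j _ => Finset.sum_comm
      _ = ∑ m, ∑ j : Fin (d + 1), ∑ k : Fin (d + 1),
            p j * (starRingEnd ℂ) (q k)
              * ((c m : ℂ) * a m ^ (j : ℕ) * (starRingEnd ℂ) (a m) ^ (k : ℕ)) :=
          Finset.sum_comm
      _ = ∑ m, (c m : ℂ) * E p m * (starRingEnd ℂ) (E q m) :=
          Finset.sum_congr rfl fun m _ => (hterm m).symm
  -- the action of M in quadrature coordinates
  have hB : ∀ p q : Fin (d + 1) → ℂ,
      momForm (d + 1) s (M p) q
        = ∑ m, (c m : ℂ) * (a m * E p m) * (starRingEnd ℂ) (E q m) := by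
    intro p q
    have hs : ∀ j k : Fin (d + 1), s ((j : ℕ) + 1) (k : ℕ)
        = ∑ m, (c m : ℂ) * a m ^ ((j : ℕ) + 1) * (starRingEnd ℂ) (a m) ^ (k : ℕ) := by
      intro j k
      have hj := j.isLt; have hk := k.isLt
      exact hquad _ _ (by omega) (by omega) (by omega)
    have hterm : ∀ m : Fin N,
        (c m : ℂ) * (a m * E p m) * (starRingEnd ℂ) (E q m)
          = ∑ j : Fin (d + 1), ∑ k : Fin (d + 1),
              p j * (starRingEnd ℂ) (q k)
                * ((c m : ℂ) * a m ^ ((j : ℕ) + 1) * (starRingEnd ℂ) (a m) ^ (k : ℕ)) := by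
      intro m
      rw [hEapp, hEapp, map_sum]
      have hstep : a m * ∑ j : Fin (d + 1), p j * a m ^ (j : ℕ)
          = ∑ j : Fin (d + 1), p j * a m ^ ((j : ℕ) + 1) := by
        rw [Finset.mul_sum]
        exact Finset.sum_congr rfl fun j _ => by ring
      rw [hstep, mul_assoc, Finset.sum_mul_sum, Finset.mul_sum]
      refine Finset.sum_congr rfl fun j _ => ?_
      rw [Finset.mul_sum]
      refine Finset.sum_congr rfl fun k _ => ?_
      simp only [map_mul, map_pow]
      ring
    rw [hM]
    simp only [hs, Finset.mul_sum]
    calc ∑ j : Fin (d + 1), ∑ k : Fin (d + 1), ∑ m,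
            p j * (starRingEnd ℂ) (q k)
              * ((c m : ℂ) * a m ^ ((j : ℕ) + 1) * (starRingEnd ℂ) (a m) ^ (k : ℕ))
        = ∑ j : Fin (d + 1), ∑ m, ∑ k : Fin (d + 1),
            p j * (starRingEnd ℂ) (q k)
              * ((c m : ℂ) * a m ^ ((j : ℕ) + 1) * (starRingEnd ℂ) (a m) ^ (k : ℕ)) :=
          Finset.sum_congr rfl fun j _ => Finset.sum_comm
      _ = ∑ m, ∑ j : Fin (d + 1), ∑ k : Fin (d + 1),
            p j * (starRingEnd ℂ) (q k)
              * ((c m : ℂ) * a m ^ ((j : ℕ) + 1) * (starRingEnd ℂ) (a m) ^ (k : ℕ)) :=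
          Finset.sum_comm
      _ = ∑ m, (c m : ℂ) * (a m * E p m) * (starRingEnd ℂ) (E q m) :=
          Finset.sum_congr rfl fun m _ => (hterm m).symm
  -- E is injective
  have hEinj : Function.Injective E := by
    rw [← LinearMap.ker_eq_bot, LinearMap.ker_eq_bot']
    intro p hp
    by_contra hne
    have hpos := hpd p hne
    rw [hA p p] at hpos
    simp [hp] at hpos
  -- N = d + 1
  have hNd : N = d + 1 := by
    have h1 := LinearMap.finrank_le_finrank_of_injective hEinj
    simp only [Module.finrank_fin_fun] at h1
    omega
  -- E is surjective
  have hEsurj : Function.Surjective E := by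
    have h1 : Module.finrank ℂ (Fin (d + 1) → ℂ) = Module.finrank ℂ (Fin N → ℂ) := by
      simp [Module.finrank_fin_fun, hNd]
    exact (LinearMap.injective_iff_surjective_of_finrank_eq_finrank h1).mp hEinj
  -- nondegeneracy in quadrature coordinates
  have hC : ∀ f : Fin N → ℂ,
      (∀ q : Fin (d + 1) → ℂ,
        ∑ m, (c m : ℂ) * f m * (starRingEnd ℂ) (E q m) = 0) → f = 0 := by
    intro f hf
    funext m0
    obtain ⟨q, hq⟩ := hEsurj (Pi.single m0 1)
    have h1 := hf q
    rw [hq] at h1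
    rw [Finset.sum_eq_single m0 (fun m _ hm => by simp [Pi.single_eq_of_ne hm])
      (fun h => absurd (Finset.mem_univ m0) h)] at h1
    simp only [Pi.single_eq_same, map_one, mul_one] at h1
    have hcm : (c m0 : ℂ) ≠ 0 := by
      exact_mod_cast ne_of_gt (hc m0)
    have := mul_eq_zero.mp h1
    tauto
  -- M acts as multiplication by a m
  have hME : ∀ (p : Fin (d + 1) → ℂ) (m : Fin N), E (M p) m = a m * E p m := by
    intro p
    have h0 : (fun m => E (M p) m - a m * E p m) = 0 := by
      apply hC
      intro q
      calc ∑ m, (c m : ℂ) * (E (M p) m - a m * E p m) * (starRingEnd ℂ) (E q m)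
          = (∑ m, (c m : ℂ) * E (M p) m * (starRingEnd ℂ) (E q m))
              - ∑ m, (c m : ℂ) * (a m * E p m) * (starRingEnd ℂ) (E q m) := by
            rw [← Finset.sum_sub_distrib]
            exact Finset.sum_congr rfl fun m _ => by ring
        _ = 0 := by rw [← hA, ← hB, sub_self]
    intro m
    have h1 := congrFun h0 m
    simpa [sub_eq_zero] using h1
  -- Mstar acts as multiplication by conj (a m)
  have hMstarE : ∀ (p : Fin (d + 1) → ℂ) (m : Fin N),
      E (Mstar p) m = (starRingEnd ℂ) (a m) * E p m := by
    intro p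
    have h0 : (fun m => E (Mstar p) m - (starRingEnd ℂ) (a m) * E p m) = 0 := by
      apply hC
      intro q
      have h2 : momForm (d + 1) s (Mstar p) q
          = ∑ m, (c m : ℂ) * ((starRingEnd ℂ) (a m) * E p m) * (starRingEnd ℂ) (E q m) := by
        rw [hMstar, hA p (M q)]
        refine Finset.sum_congr rfl fun m _ => ?_
        rw [hME q m]
        simp only [map_mul]
        ring
      calc ∑ m, (c m : ℂ) * (E (Mstar p) m - (starRingEnd ℂ) (a m) * E p m)
              * (starRingEnd ℂ) (E q m)
          = (∑ m, (c m : ℂ) * E (Mstar p) m * (starRingEnd ℂ) (E q m))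
              - ∑ m, (c m : ℂ) * ((starRingEnd ℂ) (a m) * E p m)
                  * (starRingEnd ℂ) (E q m) := by
            rw [← Finset.sum_sub_distrib]
            exact Finset.sum_congr rfl fun m _ => by ring
        _ = 0 := by rw [← hA, ← h2, sub_self]
    intro m
    have h1 := congrFun h0 m
    simpa [sub_eq_zero] using h1
  -- normality
  have hcomm : Mstar * M = M * Mstar := by
    apply LinearMap.ext
    intro p
    apply hEinj
    funext m
    rw [Module.End.mul_apply, Module.End.mul_apply, hMstarE, hME, hME, hMstarE]
    ring
  -- powers of M
  have hpow : ∀ (n : ℕ) (p : Fin (d + 1) → ℂ) (m : Fin N),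
      E ((M ^ n) p) m = a m ^ n * E p m := by
    intro n
    induction n with
    | zero => intro p m; simp
    | succ n ih =>
        intro p m
        rw [pow_succ, Module.End.mul_apply, ih (M p) m, hME, pow_succ]
        ring
  -- E of the constant 1
  have hone : ∀ m : Fin N, E (Pi.single (0 : Fin (d + 1)) (1 : ℂ)) m = 1 := by
    intro m
    rw [hEapp]
    rw [Finset.sum_eq_single (0 : Fin (d + 1))
      (fun j _ hj => by simp [Pi.single_eq_of_ne hj])
      (fun h => absurd (Finset.mem_univ _) h)]
    simp
  -- evaluation of P(M)·1
  have heval : ∀ (P : Polynomial ℂ) (m : Fin N),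
      E ((Polynomial.aeval M P) (Pi.single 0 1)) m = P.eval (a m) := by
    intro P
    induction P using Polynomial.induction_on' with
    | add p q hp hq =>
        intro m
        rw [map_add, LinearMap.add_apply, map_add]
        simp [hp m, hq m]
    | monomial n t =>
        intro m
        rw [Polynomial.aeval_monomial, Module.End.mul_apply,
          Module.algebraMap_end_apply, map_smul, Pi.smul_apply, hpow, hone,
          Polynomial.eval_monomial]
        simp [smul_eq_mul]
  refine ⟨hcomm, hNd, ?_⟩
  intro P Q
  rw [hA]
  exact Finset.sum_congr rfl fun m _ => by rw [heval, heval]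
end
end

section
/- Let a > 0 and define the Dirichlet-type inner product ⟨p, q⟩ := ∫_{−a}^{a} ( p(x)·conj(q(x)) + p'(x)·conj(q'(x)) ) dx for complex polynomials p, q ∈ ℂ[z] (evaluated at real x, with p', q' the formal derivatives). Suppose p and q are both even (p(−z) = p(z) and q(−z) = q(z)) or both odd (p(−z) = −p(z) and q(−z) = −q(z)), and p(a) = p(−a) = q(a) = q(−a) = 0. Then ⟨z·p, q⟩ + ⟨p, z·q⟩ = 0, where z·p denotes the polynomial X·p. In particular the compression of multiplication by z to such a subspace is skew-adjoint. -/
/-!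
Writing `⟪p, q⟫(x) = p(x) conj q(x)`, the product rule turns the integrand of
`⟨z p, q⟩ + ⟨p, z q⟩` into `(⟪p, q⟫)' + 2x (⟪p, q⟫ + ⟪p', q'⟫)`. The first summand integrates
to the boundary term `⟪p, q⟫(a) - ⟪p, q⟫(-a)`, which vanishes because `p(±a) = 0`. When `p` and
`q` have the same parity so do `p'` and `q'`, hence `⟪p, q⟫ + ⟪p', q'⟫` is even and the second
summand is odd, with integral zero over `[-a, a]`.
-/

noncomputable section

def dirInner (a : ℝ) (p q : Polynomial ℂ) : ℂ :=
  ∫ x in (-a)..a,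
    (p.eval (x : ℂ) * (starRingEnd ℂ) (q.eval (x : ℂ))
      + (Polynomial.derivative p).eval (x : ℂ)
          * (starRingEnd ℂ) ((Polynomial.derivative q).eval (x : ℂ)))

open Polynomial intervalIntegral ComplexConjugate

theorem Function.Odd.intervalIntegral_neg_self_eq_zero {E : Type*} [NormedAddCommGroup E]
    [NormedSpace ℝ E] {f : ℝ → E} (hf : f.Odd) (a : ℝ) : ∫ x in (-a)..a, f x = 0 := by
  have h := integral_comp_neg (a := -a) (b := a) f
  simp only [neg_neg, hf.eq, integral_neg] at h
  have h2 : (2 : ℝ) • ∫ x in (-a)..a, f x = 0 := by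
    rw [two_smul]; nth_rewrite 1 [← h]; exact neg_add_cancel _
  exact (smul_eq_zero.mp h2).resolve_left two_ne_zero

theorem Polynomial.eval_neg_derivative {p : ℂ[X]} {ε : ℂ} (hp : ∀ z, p.eval (-z) = ε * p.eval z)
    (z : ℂ) : (derivative p).eval (-z) = -ε * (derivative p).eval z := by
  have hcomp : p.comp (-X) = C ε * p := Polynomial.funext fun w => by simp [hp]
  have hd := congrArg (eval z ∘ derivative) hcomp
  simp only [Function.comp_apply, derivative_comp, derivative_mul, derivative_C, derivative_neg,
    derivative_X, eval_mul, eval_neg, eval_one, eval_comp, eval_X, eval_C, zero_mul,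
    zero_add] at hd
  linear_combination -hd

def evalMulConj (p q : ℂ[X]) (x : ℝ) : ℂ := p.eval (x : ℂ) * conj (q.eval (x : ℂ))

theorem dirInner_eq_integral (a : ℝ) (p q : ℂ[X]) :
    dirInner a p q =
      ∫ x in (-a)..a, evalMulConj p q x + evalMulConj (derivative p) (derivative q) x :=
  rfl

@[fun_prop]
theorem continuous_evalMulConj (p q : ℂ[X]) : Continuous (evalMulConj p q) := by
  unfold evalMulConj; fun_prop

theorem hasDerivAt_evalMulConj (p q : ℂ[X]) (x : ℝ) :
    HasDerivAt (evalMulConj p q)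
      (evalMulConj (derivative p) q x + evalMulConj p (derivative q) x) x := by
  have hp := (p.hasDerivAt (x : ℂ)).comp_ofReal
  have hq := (q.hasDerivAt (x : ℂ)).comp_ofReal.star
  exact (hp.mul hq).congr_deriv (by simp [evalMulConj])

theorem evalMulConj_even {p q : ℂ[X]} {ε : ℂ} (hε : ε * conj ε = 1)
    (hp : ∀ z, p.eval (-z) = ε * p.eval z) (hq : ∀ z, q.eval (-z) = ε * q.eval z) :
    (evalMulConj p q).Even := fun x => by
  simp only [evalMulConj, Complex.ofReal_neg, hp, hq, map_mul]
  linear_combination (eval (x : ℂ) p * conj (eval (x : ℂ) q)) * hε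

theorem evalMulConj_add_derivative_even {p q : ℂ[X]} {ε : ℂ} (hε : ε * conj ε = 1)
    (hp : ∀ z, p.eval (-z) = ε * p.eval z) (hq : ∀ z, q.eval (-z) = ε * q.eval z) :
    (fun x => evalMulConj p q x + evalMulConj (derivative p) (derivative q) x).Even :=
  (evalMulConj_even hε hp hq).add <|
    evalMulConj_even (by simpa using hε) (eval_neg_derivative hp) (eval_neg_derivative hq)

theorem evalMulConj_X_mul_add (p q : ℂ[X]) (x : ℝ) :
    evalMulConj (X * p) q x + evalMulConj (derivative (X * p)) (derivative q) x
        + (evalMulConj p (X * q) x + evalMulConj (derivative p) (derivative (X * q)) x) =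
      (evalMulConj (derivative p) q x + evalMulConj p (derivative q) x)
        + 2 * x * (evalMulConj p q x + evalMulConj (derivative p) (derivative q) x) := by
  simp only [evalMulConj, eval_mul, eval_X, derivative_mul, derivative_X, eval_add,
    one_mul, map_mul, map_add, Complex.conj_ofReal]
  ring

theorem dirInner_X_mul_add_dirInner_X_mul (a : ℝ) (p q : ℂ[X]) :
    dirInner a (X * p) q + dirInner a p (X * q) =
      evalMulConj p q a - evalMulConj p q (-a)
        + ∫ x in (-a)..a,
            2 * x * (evalMulConj p q x + evalMulConj (derivative p) (derivative q) x) := by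
  have hint : ∀ r s : ℂ[X], IntervalIntegrable (evalMulConj r s) MeasureTheory.volume (-a) a :=
    fun r s => (continuous_evalMulConj r s).intervalIntegrable _ _
  have hint₂ : IntervalIntegrable (fun x : ℝ =>
      2 * (x : ℂ) * (evalMulConj p q x + evalMulConj (derivative p) (derivative q) x))
      MeasureTheory.volume (-a) a :=
    Continuous.intervalIntegrable (by fun_prop) _ _
  rw [← integral_eq_sub_of_hasDerivAt (fun x _ => hasDerivAt_evalMulConj p q x)
      ((hint _ _).add (hint _ _)), ← integral_add ((hint _ _).add (hint _ _)) hint₂,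
    dirInner_eq_integral, dirInner_eq_integral,
    ← integral_add ((hint _ _).add (hint _ _)) ((hint _ _).add (hint _ _))]
  exact integral_congr fun x _ => evalMulConj_X_mul_add p q x

theorem statement16_general (a : ℝ) (p q : Polynomial ℂ)
    (hpar : (∀ z : ℂ, p.eval (-z) = p.eval z ∧ q.eval (-z) = q.eval z)
          ∨ (∀ z : ℂ, p.eval (-z) = -p.eval z ∧ q.eval (-z) = -q.eval z))
    (hpa : p.eval (a : ℂ) = 0) (hpna : p.eval (-(a : ℂ)) = 0) :
    dirInner a (Polynomial.X * p) q + dirInner a p (Polynomial.X * q) = 0 := by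
  have heven : (fun x => evalMulConj p q x + evalMulConj (derivative p) (derivative q) x).Even := by
    rcases hpar with h | h
    · exact evalMulConj_add_derivative_even (ε := 1) (by simp)
        (fun z => by simp [(h z).1]) (fun z => by simp [(h z).2])
    · exact evalMulConj_add_derivative_even (ε := -1) (by simp)
        (fun z => by simp [(h z).1]) (fun z => by simp [(h z).2])
  have hodd : (fun x : ℝ =>
      2 * (x : ℂ) * (evalMulConj p q x + evalMulConj (derivative p) (derivative q) x)).Odd :=
    fun x => by simp only [heven.eq, Complex.ofReal_neg]; ring
  rw [dirInner_X_mul_add_dirInner_X_mul, hodd.intervalIntegral_neg_self_eq_zero]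
  simp [evalMulConj, hpa, hpna]

/-- if `p, q` are both even or both odd and vanish at `±a`, then
`⟨z·p, q⟩ + ⟨p, z·q⟩ = 0` for the Dirichlet-type inner product; the compression of
multiplication by `z` to such a subspace is skew-adjoint. -/
theorem statement16 (a : ℝ) (ha : 0 < a) (p q : Polynomial ℂ)
    (hpar : (∀ z : ℂ, p.eval (-z) = p.eval z ∧ q.eval (-z) = q.eval z)
          ∨ (∀ z : ℂ, p.eval (-z) = -p.eval z ∧ q.eval (-z) = -q.eval z))
    (hpa : p.eval (a : ℂ) = 0) (hpna : p.eval (-(a : ℂ)) = 0)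
    (hqa : q.eval (a : ℂ) = 0) (hqna : q.eval (-(a : ℂ)) = 0) :
    dirInner a (Polynomial.X * p) q + dirInner a p (Polynomial.X * q) = 0 :=
  statement16_general a p q hpar hpa hpna
end
end

section
/- For every q ∈ ℂ_d[z], ⟨(M*M − MM*) q, q⟩_L + β²·|⟨q, P_d⟩_L|² ≥ 0. Equivalently, M*M − MM* + β²·Π is positive semidefinite, where Π is the orthogonal projection of ℂ_d[z] onto the line spanned by P_d; i.e. the self-commutator of M is normal up to the rank-one correction K = β²·Π. -/
open Finset
open scoped BigOperators

noncomputable section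

/-- The index set of monomials `z^a z̄^b` of total degree at most `n`. -/
def pairSet (n : ℕ) : Finset (ℕ × ℕ) :=
  (Finset.range (n + 1) ×ˢ Finset.range (n + 1)).filter fun ab => ab.1 + ab.2 ≤ n

/-- `L(|f|²)` for a polynomial `f(z,z̄) = ∑ f_{ab} z^a z̄^b` of total degree at most `n`. -/
def sqForm (n : ℕ) (s : ℕ → ℕ → ℂ) (f : ℕ × ℕ → ℂ) : ℂ :=
  ∑ ab ∈ pairSet n, ∑ ab' ∈ pairSet n,
    f ab * (starRingEnd ℂ) (f ab') * s (ab.1 + ab'.2) (ab.2 + ab'.1)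

/-- A polynomial of degree at most `d`, viewed as one of degree at most `d+1`. -/
def embUp (d : ℕ) (p : Fin (d + 1) → ℂ) : Fin (d + 2) → ℂ :=
  fun i => if h : (i : ℕ) < d + 1 then p ⟨i, h⟩ else 0

/-- The coefficient vector of `z·p`, for `p` of degree at most `d`. -/
def shiftUp (d : ℕ) (p : Fin (d + 1) → ℂ) : Fin (d + 2) → ℂ :=
  fun i => if h : (i : ℕ) = 0 then 0 else p ⟨(i : ℕ) - 1, by have := i.isLt; omega⟩

/-- The seminorm `‖f‖_L` on polynomials of degree at most `d+1`. -/
def semN (d : ℕ) (s : ℕ → ℕ → ℂ) (f : Fin (d + 2) → ℂ) : ℝ :=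
  Real.sqrt (momForm (d + 2) s f f).re

/-- The set of seminorm distances from `z·p` to elements of `ℂ_d[z]`; its infimum is the
distance from `z·p` to `ℂ_d[z]`. -/
def betaSet (d : ℕ) (s : ℕ → ℕ → ℂ) (p : Fin (d + 1) → ℂ) : Set ℝ :=
  {r : ℝ | ∃ q : Fin (d + 1) → ℂ, r = semN d s (shiftUp d p - embUp d q)}


namespace St18

/-- The big sesquilinear moment form on mixed polynomials of total degree at most `d+2`. -/
def F (d : ℕ) (s : ℕ → ℕ → ℂ) (f g : ℕ × ℕ → ℂ) : ℂ :=
  ∑ ab ∈ pairSet (d + 2), ∑ ab' ∈ pairSet (d + 2),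
    f ab * (starRingEnd ℂ) (g ab') * s (ab.1 + ab'.2) (ab.2 + ab'.1)

lemma F_self (d : ℕ) (s : ℕ → ℕ → ℂ) (f : ℕ × ℕ → ℂ) : F d s f f = sqForm (d + 2) s f := rfl

lemma F_add_left (d : ℕ) (s : ℕ → ℕ → ℂ) (f f' g : ℕ × ℕ → ℂ) :
    F d s (f + f') g = F d s f g + F d s f' g := by
  simp [F, add_mul, Finset.sum_add_distrib]

lemma F_sub_left (d : ℕ) (s : ℕ → ℕ → ℂ) (f f' g : ℕ × ℕ → ℂ) :
    F d s (f - f') g = F d s f g - F d s f' g := by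
  simp [F, sub_mul, Finset.sum_sub_distrib]

lemma F_sub_right (d : ℕ) (s : ℕ → ℕ → ℂ) (f g g' : ℕ × ℕ → ℂ) :
    F d s f (g - g') = F d s f g - F d s f g' := by
  simp [F, sub_mul, mul_sub, Finset.sum_sub_distrib]

lemma F_add_right (d : ℕ) (s : ℕ → ℕ → ℂ) (f g g' : ℕ × ℕ → ℂ) :
    F d s f (g + g') = F d s f g + F d s f g' := by
  simp [F, add_mul, mul_add, Finset.sum_add_distrib]

lemma F_smul_left (d : ℕ) (s : ℕ → ℕ → ℂ) (c : ℂ) (f g : ℕ × ℕ → ℂ) :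
    F d s (c • f) g = c * F d s f g := by
  simp only [F, Pi.smul_apply, smul_eq_mul, Finset.mul_sum]
  exact Finset.sum_congr rfl fun ab _ => Finset.sum_congr rfl fun ab' _ => by ring

lemma F_smul_right (d : ℕ) (s : ℕ → ℕ → ℂ) (c : ℂ) (f g : ℕ × ℕ → ℂ) :
    F d s f (c • g) = (starRingEnd ℂ) c * F d s f g := by
  simp only [F, Pi.smul_apply, smul_eq_mul, Finset.mul_sum, map_mul]
  exact Finset.sum_congr rfl fun ab _ => Finset.sum_congr rfl fun ab' _ => by ring

lemma mem_pairSet {n : ℕ} {ab : ℕ × ℕ} :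
    ab ∈ pairSet n ↔ ab.1 + ab.2 ≤ n := by
  simp only [pairSet, Finset.mem_filter, Finset.mem_product, Finset.mem_range]
  omega

lemma sum_pairSet_eq {n c m : ℕ} (hm : m + c ≤ n + 1) (g : ℕ × ℕ → ℂ)
    (h0 : ∀ ab ∈ pairSet n, g ab ≠ 0 → ab.2 = c ∧ ab.1 < m) :
    ∑ ab ∈ pairSet n, g ab = ∑ a ∈ Finset.range m, g (a, c) := by
  have himg : ∑ ab ∈ (Finset.range m).image (fun a => (a, c)), g ab
      = ∑ a ∈ Finset.range m, g (a, c) :=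
    Finset.sum_image (by intro x _ y _ h; simpa using congrArg Prod.fst h)
  rw [← himg]
  refine (Finset.sum_subset ?_ ?_).symm
  · intro ab hab
    simp only [Finset.mem_image, Finset.mem_range] at hab
    obtain ⟨a, ha, rfl⟩ := hab
    exact mem_pairSet.mpr (by omega)
  · intro ab hab hnot
    by_contra hne
    obtain ⟨h2, h1⟩ := h0 ab hab hne
    exact hnot (Finset.mem_image.mpr ⟨ab.1, Finset.mem_range.mpr h1,
      by rw [← h2]⟩)

/-- Embed a degree-`≤ d` polynomial as a mixed polynomial (holomorphic part only). -/
def iota (d : ℕ) (p : Fin (d + 1) → ℂ) : ℕ × ℕ → ℂ :=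
  fun ab => if h : ab.2 = 0 ∧ ab.1 < d + 1 then p ⟨ab.1, h.2⟩ else 0

/-- The mixed polynomial `z·p`. -/
def ziota (d : ℕ) (p : Fin (d + 1) → ℂ) : ℕ × ℕ → ℂ :=
  fun ab => if h : ab.2 = 0 ∧ 1 ≤ ab.1 ∧ ab.1 < d + 2 then p ⟨ab.1 - 1, by omega⟩ else 0

/-- The mixed polynomial `z̄·p`. -/
def biota (d : ℕ) (p : Fin (d + 1) → ℂ) : ℕ × ℕ → ℂ :=
  fun ab => if h : ab.2 = 1 ∧ ab.1 < d + 1 then p ⟨ab.1, h.2⟩ else 0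

/-- Embed a degree-`≤ d+1` polynomial as a mixed polynomial. -/
def iota2 (d : ℕ) (f : Fin (d + 2) → ℂ) : ℕ × ℕ → ℂ :=
  fun ab => if h : ab.2 = 0 ∧ ab.1 < d + 2 then f ⟨ab.1, h.2⟩ else 0

lemma iota_sub (d : ℕ) (p q : Fin (d + 1) → ℂ) :
    iota d (p - q) = iota d p - iota d q := by
  funext ab; simp only [iota, Pi.sub_apply]; split <;> simp

lemma iota_smul (d : ℕ) (c : ℂ) (p : Fin (d + 1) → ℂ) :
    iota d (c • p) = c • iota d p := by
  funext ab; simp only [iota, Pi.smul_apply, smul_eq_mul]; split <;> simp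

lemma iota_sum {ι : Type*} (t : Finset ι) (d : ℕ) (v : ι → Fin (d + 1) → ℂ) :
    iota d (∑ i ∈ t, v i) = ∑ i ∈ t, iota d (v i) := by
  funext ab; simp only [iota, Finset.sum_apply]; split <;> simp [iota]

lemma ziota_smul (d : ℕ) (c : ℂ) (p : Fin (d + 1) → ℂ) :
    ziota d (c • p) = c • ziota d p := by
  funext ab; simp only [ziota, Pi.smul_apply, smul_eq_mul]; split <;> simp

lemma ziota_sum {ι : Type*} (t : Finset ι) (d : ℕ) (v : ι → Fin (d + 1) → ℂ) :
    ziota d (∑ i ∈ t, v i) = ∑ i ∈ t, ziota d (v i) := by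
  funext ab; simp only [ziota, Finset.sum_apply]; split <;> simp [ziota]

lemma F_iota_iota (d : ℕ) (s : ℕ → ℕ → ℂ) (p q : Fin (d + 1) → ℂ) :
    F d s (iota d p) (iota d q) = momForm (d + 1) s p q := by
  rw [F, sum_pairSet_eq (c := 0) (m := d + 1) (by omega) _ (fun ab _ hne => by
    have h1 : iota d p ab ≠ 0 := fun h => hne (by simp [h])
    by_contra h; exact h1 (dif_neg h))]
  refine Eq.trans (Finset.sum_congr rfl fun a _ =>
    sum_pairSet_eq (c := 0) (m := d + 1) (by omega) _ (fun ab' _ hne => by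
      have h1 : iota d q ab' ≠ 0 := fun h => hne (by simp [h])
      by_contra h; exact h1 (dif_neg h))) ?_
  rw [momForm]
  rw [← Fin.sum_univ_eq_sum_range (fun a => ∑ a' ∈ Finset.range (d + 1),
    iota d p (a, 0) * (starRingEnd ℂ) (iota d q (a', 0)) * s ((a, 0).1 + (a', 0).2) ((a, 0).2 + (a', 0).1))]
  refine Finset.sum_congr rfl fun j _ => ?_
  rw [← Fin.sum_univ_eq_sum_range (fun a' =>
    iota d p (↑j, 0) * (starRingEnd ℂ) (iota d q (a', 0)) * s ((↑j : ℕ) + (a', 0).2) (((↑j : ℕ), 0).2 + (a', 0).1))]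
  refine Finset.sum_congr rfl fun k _ => ?_
  simp [iota, j.isLt, k.isLt]

lemma F_ziota_iota (d : ℕ) (s : ℕ → ℕ → ℂ) (p q : Fin (d + 1) → ℂ) :
    F d s (ziota d p) (iota d q)
      = ∑ j : Fin (d + 1), ∑ k : Fin (d + 1),
          p j * (starRingEnd ℂ) (q k) * s ((j : ℕ) + 1) (k : ℕ) := by
  rw [F, sum_pairSet_eq (c := 0) (m := d + 2) (by omega) _ (fun ab _ hne => by
    have h1 : ziota d p ab ≠ 0 := fun h => hne (by simp [h])
    by_contra h; exact h1 (dif_neg fun hc => h ⟨hc.1, hc.2.2⟩))]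
  refine Eq.trans (Finset.sum_congr rfl fun a _ =>
    sum_pairSet_eq (c := 0) (m := d + 1) (by omega) _ (fun ab' _ hne => by
      have h1 : iota d q ab' ≠ 0 := fun h => hne (by simp [h])
      by_contra h; exact h1 (dif_neg h))) ?_
  rw [Finset.sum_range_succ']
  have h0 : ∑ a' ∈ Finset.range (d + 1),
      ziota d p (0, 0) * (starRingEnd ℂ) (iota d q (a', 0)) * s (0 + (a', 0).2) (0 + (a', 0).1) = 0 := by
    simp [ziota]
  rw [h0, add_zero]
  rw [← Fin.sum_univ_eq_sum_range (fun a => ∑ a' ∈ Finset.range (d + 1),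
    ziota d p (a + 1, 0) * (starRingEnd ℂ) (iota d q (a', 0)) * s (a + 1 + (a', 0).2) (0 + (a', 0).1))]
  refine Finset.sum_congr rfl fun j _ => ?_
  rw [← Fin.sum_univ_eq_sum_range (fun a' =>
    ziota d p ((↑j : ℕ) + 1, 0) * (starRingEnd ℂ) (iota d q (a', 0)) * s ((↑j : ℕ) + 1 + 0) (0 + a'))]
  refine Finset.sum_congr rfl fun k _ => ?_
  have hj := j.isLt
  simp [ziota, iota, k.isLt, Nat.lt_succ_iff, hj, Nat.succ_le_iff]

lemma F_biota_iota (d : ℕ) (s : ℕ → ℕ → ℂ) (p q : Fin (d + 1) → ℂ) :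
    F d s (biota d p) (iota d q)
      = ∑ j : Fin (d + 1), ∑ k : Fin (d + 1),
          p j * (starRingEnd ℂ) (q k) * s (j : ℕ) ((k : ℕ) + 1) := by
  rw [F, sum_pairSet_eq (c := 1) (m := d + 1) (by omega) _ (fun ab _ hne => by
    have h1 : biota d p ab ≠ 0 := fun h => hne (by simp [h])
    by_contra h; exact h1 (dif_neg h))]
  refine Eq.trans (Finset.sum_congr rfl fun a _ =>
    sum_pairSet_eq (c := 0) (m := d + 1) (by omega) _ (fun ab' _ hne => by
      have h1 : iota d q ab' ≠ 0 := fun h => hne (by simp [h])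
      by_contra h; exact h1 (dif_neg h))) ?_
  rw [← Fin.sum_univ_eq_sum_range (fun a => ∑ a' ∈ Finset.range (d + 1),
    biota d p (a, 1) * (starRingEnd ℂ) (iota d q (a', 0)) * s (a + (a', 0).2) (1 + (a', 0).1))]
  refine Finset.sum_congr rfl fun j _ => ?_
  rw [← Fin.sum_univ_eq_sum_range (fun a' =>
    biota d p ((↑j : ℕ), 1) * (starRingEnd ℂ) (iota d q (a', 0)) * s ((↑j : ℕ) + 0) (1 + a'))]
  refine Finset.sum_congr rfl fun k _ => ?_
  simp [biota, iota, j.isLt, k.isLt, Nat.add_comm 1 (k : ℕ)]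

lemma F_ziota_ziota (d : ℕ) (s : ℕ → ℕ → ℂ) (p q : Fin (d + 1) → ℂ) :
    F d s (ziota d p) (ziota d q)
      = ∑ j : Fin (d + 1), ∑ k : Fin (d + 1),
          p j * (starRingEnd ℂ) (q k) * s ((j : ℕ) + 1) ((k : ℕ) + 1) := by
  rw [F, sum_pairSet_eq (c := 0) (m := d + 2) (by omega) _ (fun ab _ hne => by
    have h1 : ziota d p ab ≠ 0 := fun h => hne (by simp [h])
    by_contra h; exact h1 (dif_neg fun hc => h ⟨hc.1, hc.2.2⟩))]
  refine Eq.trans (Finset.sum_congr rfl fun a _ =>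
    sum_pairSet_eq (c := 0) (m := d + 2) (by omega) _ (fun ab' _ hne => by
      have h1 : ziota d q ab' ≠ 0 := fun h => hne (by simp [h])
      by_contra h; exact h1 (dif_neg fun hc => h ⟨hc.1, hc.2.2⟩))) ?_
  rw [Finset.sum_range_succ']
  have h0 : ∑ a' ∈ Finset.range (d + 2),
      ziota d p (0, 0) * (starRingEnd ℂ) (ziota d q (a', 0)) * s (0 + (a', 0).2) (0 + (a', 0).1) = 0 := by
    simp [ziota]
  rw [h0, add_zero]
  rw [← Fin.sum_univ_eq_sum_range (fun a => ∑ a' ∈ Finset.range (d + 2),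
    ziota d p (a + 1, 0) * (starRingEnd ℂ) (ziota d q (a', 0)) * s (a + 1 + (a', 0).2) (0 + (a', 0).1))]
  refine Finset.sum_congr rfl fun j _ => ?_
  rw [Finset.sum_range_succ']
  have h0' : ziota d p ((↑j : ℕ) + 1, 0) * (starRingEnd ℂ) (ziota d q (0, 0))
      * s ((↑j : ℕ) + 1 + (0, 0).2) (0 + (0, 0).1) = 0 := by simp [ziota]
  rw [h0', add_zero]
  rw [← Fin.sum_univ_eq_sum_range (fun a' =>
    ziota d p ((↑j : ℕ) + 1, 0) * (starRingEnd ℂ) (ziota d q (a' + 1, 0)) * s ((↑j : ℕ) + 1 + 0) (0 + (a' + 1)))]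
  refine Finset.sum_congr rfl fun k _ => ?_
  have hj := j.isLt; have hk := k.isLt
  simp [ziota, Nat.succ_le_iff, hj, hk]

lemma F_biota_biota (d : ℕ) (s : ℕ → ℕ → ℂ) (p q : Fin (d + 1) → ℂ) :
    F d s (biota d p) (biota d q)
      = ∑ j : Fin (d + 1), ∑ k : Fin (d + 1),
          p j * (starRingEnd ℂ) (q k) * s ((j : ℕ) + 1) ((k : ℕ) + 1) := by
  rw [F, sum_pairSet_eq (c := 1) (m := d + 1) (by omega) _ (fun ab _ hne => by
    have h1 : biota d p ab ≠ 0 := fun h => hne (by simp [h])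
    by_contra h; exact h1 (dif_neg h))]
  refine Eq.trans (Finset.sum_congr rfl fun a _ =>
    sum_pairSet_eq (c := 1) (m := d + 1) (by omega) _ (fun ab' _ hne => by
      have h1 : biota d q ab' ≠ 0 := fun h => hne (by simp [h])
      by_contra h; exact h1 (dif_neg h))) ?_
  rw [← Fin.sum_univ_eq_sum_range (fun a => ∑ a' ∈ Finset.range (d + 1),
    biota d p (a, 1) * (starRingEnd ℂ) (biota d q (a', 1)) * s (a + (a', 1).2) (1 + (a', 1).1))]
  refine Finset.sum_congr rfl fun j _ => ?_
  rw [← Fin.sum_univ_eq_sum_range (fun a' =>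
    biota d p ((↑j : ℕ), 1) * (starRingEnd ℂ) (biota d q (a', 1)) * s ((↑j : ℕ) + 1) (1 + a'))]
  refine Finset.sum_congr rfl fun k _ => ?_
  simp [biota, j.isLt, k.isLt, Nat.add_comm 1 (k : ℕ)]

lemma F_iota2_iota2 (d : ℕ) (s : ℕ → ℕ → ℂ) (f g : Fin (d + 2) → ℂ) :
    F d s (iota2 d f) (iota2 d g) = momForm (d + 2) s f g := by
  rw [F, sum_pairSet_eq (c := 0) (m := d + 2) (by omega) _ (fun ab _ hne => by
    have h1 : iota2 d f ab ≠ 0 := fun h => hne (by simp [h])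
    by_contra h; exact h1 (dif_neg h))]
  refine Eq.trans (Finset.sum_congr rfl fun a _ =>
    sum_pairSet_eq (c := 0) (m := d + 2) (by omega) _ (fun ab' _ hne => by
      have h1 : iota2 d g ab' ≠ 0 := fun h => hne (by simp [h])
      by_contra h; exact h1 (dif_neg h))) ?_
  rw [momForm]
  rw [← Fin.sum_univ_eq_sum_range (fun a => ∑ a' ∈ Finset.range (d + 2),
    iota2 d f (a, 0) * (starRingEnd ℂ) (iota2 d g (a', 0)) * s (a + (a', 0).2) (0 + (a', 0).1))]
  refine Finset.sum_congr rfl fun j _ => ?_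
  rw [← Fin.sum_univ_eq_sum_range (fun a' =>
    iota2 d f ((↑j : ℕ), 0) * (starRingEnd ℂ) (iota2 d g (a', 0)) * s ((↑j : ℕ) + 0) (0 + a'))]
  refine Finset.sum_congr rfl fun k _ => ?_
  simp [iota2, j.isLt, k.isLt]

lemma iota2_shift (d : ℕ) (p q : Fin (d + 1) → ℂ) :
    iota2 d (shiftUp d p - embUp d q) = ziota d p - iota d q := by
  funext ab
  obtain ⟨a, b⟩ := ab
  simp only [iota2, ziota, iota, Pi.sub_apply, shiftUp, embUp]
  split_ifs <;> first | rfl | omega | simp_all | (exfalso; omega)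

lemma F_conj (d : ℕ) (s : ℕ → ℕ → ℂ)
    (hherm : ∀ j k : ℕ, j + k ≤ 2 * d + 4 → s j k = (starRingEnd ℂ) (s k j))
    (f g : ℕ × ℕ → ℂ) : F d s g f = (starRingEnd ℂ) (F d s f g) := by
  rw [F, F]
  simp only [map_sum]
  conv_rhs => rw [Finset.sum_comm]
  refine Finset.sum_congr rfl fun x hx => Finset.sum_congr rfl fun y hy => ?_
  have hb : (y.2 + x.1) + (y.1 + x.2) ≤ 2 * d + 4 := by
    have h1 := mem_pairSet.mp hx; have h2 := mem_pairSet.mp hy; omega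
  have h1 : (starRingEnd ℂ) (s (y.1 + x.2) (y.2 + x.1)) = s (y.2 + x.1) (y.1 + x.2) :=
    (hherm _ _ hb).symm
  rw [map_mul, map_mul, h1, Complex.conj_conj, add_comm y.2 x.1, add_comm y.1 x.2]
  ring

lemma momForm_conj (d : ℕ) (s : ℕ → ℕ → ℂ)
    (hherm : ∀ j k : ℕ, j + k ≤ 2 * d + 4 → s j k = (starRingEnd ℂ) (s k j))
    (p q : Fin (d + 1) → ℂ) :
    momForm (d + 1) s q p = (starRingEnd ℂ) (momForm (d + 1) s p q) := by
  rw [← F_iota_iota, ← F_iota_iota, F_conj d s hherm]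

lemma momForm_sub_left (n : ℕ) (s : ℕ → ℕ → ℂ) (p p' q : Fin n → ℂ) :
    momForm n s (p - p') q = momForm n s p q - momForm n s p' q := by
  simp [momForm, sub_mul, Finset.sum_sub_distrib]

lemma momForm_factor (n : ℕ) (s : ℕ → ℕ → ℂ) (p w : Fin n → ℂ) :
    momForm n s p w = ∑ j : Fin n, p j * (∑ k : Fin n, (starRingEnd ℂ) (w k) * s j k) := by
  rw [momForm]
  refine Finset.sum_congr rfl fun j _ => ?_
  rw [Finset.mul_sum]
  exact Finset.sum_congr rfl fun k _ => by ring

lemma momForm_sum_smul_left {ι : Type*} (t : Finset ι) (n : ℕ) (s : ℕ → ℕ → ℂ)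
    (c : ι → ℂ) (v : ι → Fin n → ℂ) (w : Fin n → ℂ) :
    momForm n s (∑ i ∈ t, c i • v i) w = ∑ i ∈ t, c i * momForm n s (v i) w := by
  rw [momForm_factor]
  simp only [Finset.sum_apply, Pi.smul_apply, smul_eq_mul, Finset.sum_mul]
  rw [Finset.sum_comm]
  refine Finset.sum_congr rfl fun i _ => ?_
  rw [momForm_factor, Finset.mul_sum]
  refine Finset.sum_congr rfl fun j _ => by ring

/-- Shift within degree `≤ d` (valid when the top coefficient vanishes). -/
def zshift (d : ℕ) (u : Fin (d + 1) → ℂ) : Fin (d + 1) → ℂ :=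
  fun i => if h : (i : ℕ) = 0 then 0 else u ⟨(i : ℕ) - 1, by have := i.isLt; omega⟩

lemma iota_zshift (d : ℕ) (u : Fin (d + 1) → ℂ) (h : u (Fin.last d) = 0) :
    iota d (zshift d u) = ziota d u := by
  funext ab
  obtain ⟨a, b⟩ := ab
  by_cases hb : b = 0
  · subst hb
    by_cases h2 : a < d + 1
    · have e1 : iota d (zshift d u) (a, 0) = zshift d u ⟨a, h2⟩ := dif_pos ⟨rfl, h2⟩
      rw [e1]
      by_cases h0 : a = 0
      · subst h0
        have e2 : zshift d u ⟨0, h2⟩ = 0 := dif_pos rfl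
        have e3 : ziota d u (0, 0) = 0 := dif_neg (by omega)
        rw [e2, e3]
      · have e2 : zshift d u ⟨a, h2⟩ = u ⟨a - 1, by omega⟩ := dif_neg h0
        have e3 : ziota d u (a, 0) = u ⟨a - 1, by omega⟩ :=
          dif_pos (⟨rfl, by omega, by omega⟩ : (0 : ℕ) = 0 ∧ 1 ≤ a ∧ a < d + 2)
        rw [e2, e3]
    · have e1 : iota d (zshift d u) (a, 0) = 0 := dif_neg (fun hc => h2 hc.2)
      rw [e1]
      by_cases h3 : a < d + 2
      · have e3 : ziota d u (a, 0) = u ⟨a - 1, by omega⟩ :=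
          dif_pos (⟨rfl, by omega, h3⟩ : (0 : ℕ) = 0 ∧ 1 ≤ a ∧ a < d + 2)
        have he : (⟨a - 1, by omega⟩ : Fin (d + 1)) = Fin.last d := by
          apply Fin.ext; simp only [Fin.last]; omega
        rw [e3, he, h]
      · have e3 : ziota d u (a, 0) = 0 := dif_neg (fun hc => h3 hc.2.2)
        rw [e3]
  · have e1 : iota d (zshift d u) (a, b) = 0 := dif_neg (fun hc => hb hc.1)
    have e3 : ziota d u (a, b) = 0 := dif_neg (fun hc => hb hc.1)
    rw [e1, e3]

lemma momForm_zshift (d : ℕ) (s : ℕ → ℕ → ℂ) (u p : Fin (d + 1) → ℂ)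
    (h : u (Fin.last d) = 0) :
    momForm (d + 1) s (zshift d u) p
      = ∑ j : Fin (d + 1), ∑ k : Fin (d + 1),
          u j * (starRingEnd ℂ) (p k) * s ((j : ℕ) + 1) (k : ℕ) := by
  rw [← F_iota_iota, iota_zshift d u h, F_ziota_iota]

end St18

/-- the self-commutator of `M` is nonnegative up to the rank-one correction
`β²·⟨·, P_d⟩P_d`: for every `q ∈ ℂ_d[z]`,
`⟨(M*M − MM*)q, q⟩_L + β²·|⟨q, P_d⟩_L|² ≥ 0`. -/
theorem statement18 (d : ℕ) (hd : 1 ≤ d) (s : ℕ → ℕ → ℂ)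
    (hherm : ∀ j k : ℕ, j + k ≤ 2 * d + 4 → s j k = (starRingEnd ℂ) (s k j))
    (hrsq : ∀ f : ℕ × ℕ → ℂ, 0 ≤ (sqForm (d + 2) s f).re)
    (hpd : ∀ p : Fin (d + 1) → ℂ, p ≠ 0 → 0 < (momForm (d + 1) s p p).re)
    (M : Module.End ℂ (Fin (d + 1) → ℂ))
    (hM : ∀ p q : Fin (d + 1) → ℂ,
      momForm (d + 1) s (M p) q
        = ∑ j : Fin (d + 1), ∑ k : Fin (d + 1),
            p j * (starRingEnd ℂ) (q k) * s ((j : ℕ) + 1) (k : ℕ))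
    (Mstar : Module.End ℂ (Fin (d + 1) → ℂ))
    (hMstar : ∀ p q : Fin (d + 1) → ℂ,
      momForm (d + 1) s (Mstar p) q = momForm (d + 1) s p (M q))
    (P : Fin (d + 1) → Fin (d + 1) → ℂ) (κ : Fin (d + 1) → ℝ)
    (hκ : ∀ j, 0 < κ j)
    (hdeg : ∀ j i : Fin (d + 1), (j : ℕ) < (i : ℕ) → P j i = 0)
    (hlead : ∀ j, P j j = (κ j : ℂ))
    (hon : ∀ j k, momForm (d + 1) s (P j) (P k) = if j = k then 1 else 0)
    (β : ℝ) (hβ : β = sInf (betaSet d s (P (Fin.last d)))) :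
    ∀ q : Fin (d + 1) → ℂ,
      0 ≤ (momForm (d + 1) s ((Mstar * M - M * Mstar) q) q).re
          + β ^ 2 * Complex.normSq (momForm (d + 1) s q (P (Fin.last d))) := by
  open St18 in
  intro q
  have hpos : ∀ f : ℕ × ℕ → ℂ, 0 ≤ (F d s f f).re := fun f => by
    rw [F_self]; exact hrsq f
  have huniq : ∀ u v : Fin (d + 1) → ℂ,
      (∀ p, momForm (d + 1) s u p = momForm (d + 1) s v p) → u = v := by
    intro u v h
    by_contra hne
    have h0 : momForm (d + 1) s (u - v) (u - v) = 0 := by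
      rw [momForm_sub_left, h (u - v), sub_self]
    have hlt := hpd (u - v) (fun h' => hne (sub_eq_zero.mp h'))
    rw [h0] at hlt
    simp at hlt
  -- basis expansion
  obtain ⟨c, hc⟩ : ∃ c : Fin (d + 1) → ℂ, q = ∑ j, c j • P j := by
    set A : Matrix (Fin (d + 1)) (Fin (d + 1)) ℂ := Matrix.of fun i j => P j i with hA
    have hAdet : A.det = ∏ i, (κ i : ℂ) := by
      rw [Matrix.det_of_upperTriangular (show A.BlockTriangular id from fun i j hij => hdeg j i hij)]
      exact Finset.prod_congr rfl fun i _ => hlead i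
    have hunit : IsUnit A.det := by
      rw [hAdet]
      exact isUnit_iff_ne_zero.mpr (Finset.prod_ne_zero_iff.mpr fun i _ => by
        exact_mod_cast (hκ i).ne')
    refine ⟨A⁻¹.mulVec q, ?_⟩
    have : A.mulVec (A⁻¹.mulVec q) = q := by
      rw [Matrix.mulVec_mulVec, Matrix.mul_nonsing_inv A hunit, Matrix.one_mulVec]
    conv_lhs => rw [← this]
    funext i
    rw [Matrix.mulVec, dotProduct]
    simp only [Finset.sum_apply, Pi.smul_apply, smul_eq_mul, hA, Matrix.of_apply]
    exact Finset.sum_congr rfl fun j _ => mul_comm _ _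
  have hcj : ∀ j, momForm (d + 1) s q (P j) = c j := by
    intro j
    rw [hc, momForm_sum_smul_left]
    simp [hon, mul_ite, Finset.sum_ite_eq']
  -- action of M on lower-degree orthonormal polynomials
  have hMP : ∀ j : Fin (d + 1), (j : ℕ) < d →
      iota d (M (P j)) = ziota d (P j) := by
    intro j hj
    have htop : P j (Fin.last d) = 0 := hdeg j (Fin.last d) (by simp [Fin.last]; omega)
    have hMw : M (P j) = zshift d (P j) :=
      huniq _ _ (fun p => by rw [hM, momForm_zshift d s (P j) p htop])
    rw [hMw, iota_zshift d (P j) htop]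
  -- orthogonality of residuals to low-degree polynomials
  have horthz : ∀ u p : Fin (d + 1) → ℂ,
      F d s (ziota d u - iota d (M u)) (iota d p) = 0 := by
    intro u p
    rw [F_sub_left, F_ziota_iota, F_iota_iota, hM, sub_self]
  have horthb : ∀ u p : Fin (d + 1) → ℂ,
      F d s (biota d u - iota d (Mstar u)) (iota d p) = 0 := by
    intro u p
    rw [F_sub_left, F_biota_iota, F_iota_iota, hMstar]
    have hmm : momForm (d + 1) s u (M p)
        = ∑ j : Fin (d + 1), ∑ k : Fin (d + 1),
            u j * (starRingEnd ℂ) (p k) * s (j : ℕ) ((k : ℕ) + 1) := by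
      rw [momForm_conj d s hherm (M p) u, hM]
      simp only [map_sum, map_mul, Complex.conj_conj]
      rw [Finset.sum_comm]
      refine Finset.sum_congr rfl fun j _ => Finset.sum_congr rfl fun k _ => ?_
      have hb : (j : ℕ) + ((k : ℕ) + 1) ≤ 2 * d + 4 := by
        have := j.isLt; have := k.isLt; omega
      rw [(hherm (j : ℕ) ((k : ℕ) + 1) hb).symm]
      ring
    rw [hmm, sub_self]
  -- Pythagoras
  have pyth : ∀ v w : ℕ × ℕ → ℂ, F d s w v = 0 →
      (F d s (v + w) (v + w)).re = (F d s v v).re + (F d s w w).re := by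
    intro v w h
    have h' : F d s v w = (starRingEnd ℂ) (F d s w v) := F_conj d s hherm w v
    rw [F_add_left, F_add_right, F_add_right, h, h', h]
    simp
  -- residual decomposition for q
  have hq_decomp : ziota d q - iota d (M q)
      = momForm (d + 1) s q (P (Fin.last d))
          • (ziota d (P (Fin.last d)) - iota d (M (P (Fin.last d)))) := by
    rw [hcj (Fin.last d)]
    conv_lhs => rw [hc]
    rw [map_sum, ziota_sum, iota_sum]
    simp only [map_smul, ziota_smul, iota_smul]
    rw [← Finset.sum_sub_distrib]
    rw [Finset.sum_eq_single (Fin.last d)]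
    · exact (smul_sub _ _ _).symm
    · intro j _ hj
      have hjd : (j : ℕ) < d := by
        have h1 := j.isLt
        have h2 : (j : ℕ) ≠ d := fun h => hj (Fin.ext (by simp [Fin.last, h]))
        omega
      rw [hMP j hjd]
      exact sub_self _
    · intro h; exact absurd (Finset.mem_univ _) h
  -- β bounds the residual of P_d
  have hβ2 : (F d s (ziota d (P (Fin.last d)) - iota d (M (P (Fin.last d))))
      (ziota d (P (Fin.last d)) - iota d (M (P (Fin.last d))))).re ≤ β ^ 2 := by
    set Pd := P (Fin.last d) with hPd
    set r0 := ziota d Pd - iota d (M Pd) with hr0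
    have hlb : ∀ rr ∈ betaSet d s Pd, Real.sqrt ((F d s r0 r0).re) ≤ rr := by
      rintro rr ⟨q', rfl⟩
      have hdecomp : ziota d Pd - iota d q' = r0 + iota d (M Pd - q') := by
        rw [iota_sub, hr0]; abel
      have hkey : (momForm (d + 2) s (shiftUp d Pd - embUp d q')
            (shiftUp d Pd - embUp d q')).re
          = (F d s r0 r0).re
            + (F d s (iota d (M Pd - q')) (iota d (M Pd - q'))).re := by
        rw [← F_iota2_iota2, iota2_shift, hdecomp]
        refine pyth _ _ ?_
        rw [F_conj d s hherm r0 (iota d (M Pd - q')), hr0, horthz Pd (M Pd - q'), map_zero]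
      rw [semN, hkey]
      exact Real.sqrt_le_sqrt (le_add_of_nonneg_right (hpos _))
    have hne : (betaSet d s Pd).Nonempty := ⟨semN d s (shiftUp d Pd - embUp d 0), 0, rfl⟩
    have hb0β : Real.sqrt ((F d s r0 r0).re) ≤ β := by
      rw [hβ]; exact le_csInf hne hlb
    nlinarith [Real.sq_sqrt (hpos r0), Real.sqrt_nonneg ((F d s r0 r0).re)]
  -- Pythagoras for z·q
  have key1 : (F d s (ziota d q) (ziota d q)).re
      = (momForm (d + 1) s (M q) (M q)).re
        + Complex.normSq (momForm (d + 1) s q (P (Fin.last d)))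
          * (F d s (ziota d (P (Fin.last d)) - iota d (M (P (Fin.last d))))
              (ziota d (P (Fin.last d)) - iota d (M (P (Fin.last d))))).re := by
    have hdc : ziota d q = iota d (M q)
        + momForm (d + 1) s q (P (Fin.last d))
            • (ziota d (P (Fin.last d)) - iota d (M (P (Fin.last d)))) := by
      rw [← hq_decomp]; abel
    rw [hdc, pyth _ _ (by rw [F_smul_left, horthz (P (Fin.last d)) (M q), mul_zero])]
    rw [F_iota_iota, F_smul_left, F_smul_right, ← mul_assoc, Complex.mul_conj]
    congr 1
    simp [Complex.mul_re]
  -- the adjoint side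
  have key2 : (momForm (d + 1) s (Mstar q) (Mstar q)).re
      ≤ (F d s (ziota d q) (ziota d q)).re := by
    have hzzbb : F d s (ziota d q) (ziota d q) = F d s (biota d q) (biota d q) := by
      rw [F_ziota_ziota, F_biota_biota]
    have hdc : biota d q = iota d (Mstar q) + (biota d q - iota d (Mstar q)) := by abel
    rw [hzzbb, hdc, pyth _ _ (horthb q (Mstar q)), F_iota_iota]
    exact le_add_of_nonneg_right (hpos _)
  -- expand the commutator
  have hexp : (momForm (d + 1) s ((Mstar * M - M * Mstar) q) q).re
      = (momForm (d + 1) s (M q) (M q)).re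
        - (momForm (d + 1) s (Mstar q) (Mstar q)).re := by
    have e1 : (Mstar * M - M * Mstar) q = Mstar (M q) - M (Mstar q) := rfl
    rw [e1, momForm_sub_left, hMstar]
    have e2 : momForm (d + 1) s (M (Mstar q)) q
        = (starRingEnd ℂ) (momForm (d + 1) s (Mstar q) (Mstar q)) := by
      rw [momForm_conj d s hherm q (M (Mstar q)), ← hMstar q (Mstar q)]
    rw [e2, Complex.sub_re, Complex.conj_re]
  rw [hexp]
  have hns : 0 ≤ Complex.normSq (momForm (d + 1) s q (P (Fin.last d))) :=
    Complex.normSq_nonneg _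
  have h2 : Complex.normSq (momForm (d + 1) s q (P (Fin.last d)))
        * (F d s (ziota d (P (Fin.last d)) - iota d (M (P (Fin.last d))))
            (ziota d (P (Fin.last d)) - iota d (M (P (Fin.last d))))).re
      ≤ Complex.normSq (momForm (d + 1) s q (P (Fin.last d))) * β ^ 2 :=
    mul_le_mul_of_nonneg_left hβ2 hns
  linarith [key1, key2, h2,
    mul_comm (β ^ 2) (Complex.normSq (momForm (d + 1) s q (P (Fin.last d))))]
end
end

section
/- For all p ∈ ℂ_d[z] and all q ∈ ℂ_{d−1}[z] (polynomials of degree at most d−1), one has ⟨p,p⟩_L + ⟨Mq, Mq⟩_L + 2·Re⟨Mp, q⟩_L ≥ 0. That is, the quadratic form σ_M(p,q) = ‖p‖_L² + ‖Mq‖_L² + 2Re⟨Mp,q⟩_L is positive semidefinite on the codimension-one subspace ℂ_d[z] ⊕ ℂ_{d−1}[z] of ℂ_d[z] ⊕ ℂ_d[z] (this follows from applying the positivity of L to the real square |p(z) + z̄·q(z)|²). -/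
open Finset
open scoped BigOperators

noncomputable section

/-- coefficient vector extended to ℕ by zero -/
def auxP (d : ℕ) (p : Fin (d + 1) → ℂ) : ℕ → ℂ :=
  fun a => if h : a < d + 1 then p ⟨a, h⟩ else 0

/-- the polynomial p(z) + z̄ q(z) -/
def auxF (d : ℕ) (p q : Fin (d + 1) → ℂ) : ℕ × ℕ → ℂ :=
  fun ab => if ab.2 = 0 then auxP d p ab.1 else if ab.2 = 1 then auxP d q ab.1 else 0

lemma auxP_coe {d : ℕ} (p : Fin (d + 1) → ℂ) (j : Fin (d + 1)) :
    auxP d p (j : ℕ) = p j := by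
  simp [auxP, j.isLt]

lemma auxF_zero (d : ℕ) (p q : Fin (d + 1) → ℂ) (a : ℕ) :
    auxF d p q (a, 0) = auxP d p a := rfl

lemma auxF_one (d : ℕ) (p q : Fin (d + 1) → ℂ) (a : ℕ) :
    auxF d p q (a, 1) = auxP d q a := rfl

lemma shift_sum {d : ℕ} (g : Fin (d + 1) → ℂ) (hg : g (Fin.last d) = 0) (G : ℕ → ℂ) :
    ∑ j : Fin (d + 1), (Fin.cases (0 : ℂ) (fun i => g i.castSucc) j) * G (j : ℕ)
      = ∑ j : Fin (d + 1), g j * G ((j : ℕ) + 1) := by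
  rw [Fin.sum_univ_succ]
  conv_rhs => rw [Fin.sum_univ_castSucc]
  simp [hg]

lemma finrange2 {d : ℕ} (g : ℕ → ℕ → ℂ) :
    ∑ j : Fin (d + 1), ∑ k : Fin (d + 1), g (j : ℕ) (k : ℕ)
      = ∑ a ∈ Finset.range (d + 1), ∑ a' ∈ Finset.range (d + 1), g a a' := by
  rw [Fin.sum_univ_eq_sum_range (fun a => ∑ k : Fin (d + 1), g a (k : ℕ))]
  exact Finset.sum_congr rfl fun a _ => Fin.sum_univ_eq_sum_range _ _

/-- the quadratic form `σ_M(p,q) = ‖p‖_L² + ‖Mq‖_L² + 2Re⟨Mp,q⟩_L` is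
nonnegative for `p ∈ ℂ_d[z]` and `q ∈ ℂ_{d−1}[z]` (i.e. `q` with vanishing top coefficient). -/
theorem statement19 (d : ℕ) (hd : 1 ≤ d) (s : ℕ → ℕ → ℂ)
    (hherm : ∀ j k : ℕ, j + k ≤ 2 * d + 2 → s j k = (starRingEnd ℂ) (s k j))
    (hrsq : ∀ f : ℕ × ℕ → ℂ, 0 ≤ (sqForm (d + 1) s f).re)
    (hpd : ∀ p : Fin (d + 1) → ℂ, p ≠ 0 → 0 < (momForm (d + 1) s p p).re)
    (M : Module.End ℂ (Fin (d + 1) → ℂ))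
    (hM : ∀ p q : Fin (d + 1) → ℂ,
      momForm (d + 1) s (M p) q
        = ∑ j : Fin (d + 1), ∑ k : Fin (d + 1),
            p j * (starRingEnd ℂ) (q k) * s ((j : ℕ) + 1) (k : ℕ)) :
    ∀ p q : Fin (d + 1) → ℂ, q (Fin.last d) = 0 →
      0 ≤ (momForm (d + 1) s p p).re + (momForm (d + 1) s (M q) (M q)).re
          + 2 * (momForm (d + 1) s (M p) q).re := by
  intro p q hq
  classical
  -- the shift of q
  set Sh : Fin (d + 1) → ℂ := fun k => Fin.cases (0 : ℂ) (fun i => q i.castSucc) k with hShdef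
  -- first-slot formula for Sh
  have key1 : ∀ r : Fin (d + 1) → ℂ,
      momForm (d + 1) s Sh r
        = ∑ j : Fin (d + 1), ∑ k : Fin (d + 1),
            q j * (starRingEnd ℂ) (r k) * s ((j : ℕ) + 1) (k : ℕ) := by
    intro r
    unfold momForm
    conv_lhs => rw [Fin.sum_univ_succ]
    conv_rhs => rw [Fin.sum_univ_castSucc]
    simp [hShdef, hq]
  -- conj of Sh is the shift of conj of q
  have hconjSh : ∀ k : Fin (d + 1),
      (starRingEnd ℂ) (Sh k) = Fin.cases (0 : ℂ) (fun i => (starRingEnd ℂ) (q i.castSucc)) k := by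
    intro k
    induction k using Fin.cases <;> simp [hShdef]
  -- momForm Sh Sh
  have keyShSh : momForm (d + 1) s Sh Sh
      = ∑ j : Fin (d + 1), ∑ k : Fin (d + 1),
          q j * (starRingEnd ℂ) (q k) * s ((j : ℕ) + 1) ((k : ℕ) + 1) := by
    unfold momForm
    conv_lhs => simp only [Fin.sum_univ_succ]
    conv_rhs => simp only [Fin.sum_univ_castSucc]
    simp [hShdef, hq]
  -- M q equals Sh
  have hMq : M q = Sh := by
    have hzr : ∀ r, momForm (d + 1) s (M q - Sh) r = 0 := by
      intro r
      have h1 : momForm (d + 1) s (M q - Sh) r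
          = momForm (d + 1) s (M q) r - momForm (d + 1) s Sh r := by
        simp [momForm, sub_mul, Finset.sum_sub_distrib]
      rw [h1, hM, key1, sub_self]
    have h0 : M q - Sh = 0 := by
      by_contra hne
      have h2 := hpd _ hne
      rw [hzr (M q - Sh)] at h2
      simp at h2
    rwa [sub_eq_zero] at h0
  -- abbreviation
  set A : ℂ := momForm (d + 1) s (M p) q with hAdef
  -- conjugate identity from hermiticity
  have hconjA : (starRingEnd ℂ) A
      = ∑ a ∈ Finset.range (d + 1), ∑ a' ∈ Finset.range (d + 1),
          auxP d q a * (starRingEnd ℂ) (auxP d p a') * s a (a' + 1) := by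
    rw [hAdef, hM p q]
    rw [← finrange2 (fun a a' => auxP d q a * (starRingEnd ℂ) (auxP d p a') * s a (a' + 1))]
    conv_lhs => simp only [map_sum]
    rw [Finset.sum_comm]
    refine Finset.sum_congr rfl fun k _ => Finset.sum_congr rfl fun j _ => ?_
    have hjk : ((j : ℕ) + 1) + (k : ℕ) ≤ 2 * d + 2 := by
      have := j.isLt; have := k.isLt; omega
    have hs := hherm ((j : ℕ) + 1) (k : ℕ) hjk
    simp only [map_mul, Complex.conj_conj, auxP_coe]
    rw [hs, Complex.conj_conj]
    ring
  -- the set where auxF is supported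
  set S : Finset (ℕ × ℕ) := Finset.range (d + 1) ×ˢ Finset.range 2 with hSdef
  have hsub : S ⊆ pairSet (d + 1) := by
    intro ab hab
    simp only [hSdef, Finset.mem_product, Finset.mem_range] at hab
    simp only [pairSet, Finset.mem_filter, Finset.mem_product, Finset.mem_range]
    omega
  have hfz : ∀ ab : ℕ × ℕ, ab ∉ S → auxF d p q ab = 0 := by
    intro ab hab
    simp only [hSdef, Finset.mem_product, Finset.mem_range, not_and_or, not_lt] at hab
    rcases hab with h1 | h2
    · have h1' : ¬ ab.1 < d + 1 := by omega
      by_cases hb0 : ab.2 = 0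
      · simp [auxF, hb0, auxP, h1']
      · by_cases hb1 : ab.2 = 1
        · simp [auxF, hb0, hb1, auxP, h1']
        · simp [auxF, hb0, hb1]
    · have hb0 : ab.2 ≠ 0 := by omega
      have hb1 : ab.2 ≠ 1 := by omega
      simp [auxF, hb0, hb1]
  -- restrict sqForm to S
  have step1 : sqForm (d + 1) s (auxF d p q)
      = ∑ ab ∈ S, ∑ ab' ∈ S,
          auxF d p q ab * (starRingEnd ℂ) (auxF d p q ab') * s (ab.1 + ab'.2) (ab.2 + ab'.1) := by
    unfold sqForm
    symm
    calc ∑ ab ∈ S, ∑ ab' ∈ S,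
            auxF d p q ab * (starRingEnd ℂ) (auxF d p q ab') * s (ab.1 + ab'.2) (ab.2 + ab'.1)
        = ∑ ab ∈ S, ∑ ab' ∈ pairSet (d + 1),
            auxF d p q ab * (starRingEnd ℂ) (auxF d p q ab') * s (ab.1 + ab'.2) (ab.2 + ab'.1) :=
          Finset.sum_congr rfl fun ab _ =>
            Finset.sum_subset hsub (fun x _ hxn => by rw [hfz x hxn]; simp)
      _ = _ :=
          Finset.sum_subset hsub (fun x _ hxn =>
            Finset.sum_eq_zero fun y _ => by rw [hfz x hxn]; simp)
  -- expand into the four blocks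
  have step2 : (∑ ab ∈ S, ∑ ab' ∈ S,
          auxF d p q ab * (starRingEnd ℂ) (auxF d p q ab') * s (ab.1 + ab'.2) (ab.2 + ab'.1))
      = (∑ a ∈ Finset.range (d + 1), ∑ a' ∈ Finset.range (d + 1),
            auxP d p a * (starRingEnd ℂ) (auxP d p a') * s (a + 0) (0 + a'))
        + (∑ a ∈ Finset.range (d + 1), ∑ a' ∈ Finset.range (d + 1),
            auxP d p a * (starRingEnd ℂ) (auxP d q a') * s (a + 1) (0 + a'))
        + (∑ a ∈ Finset.range (d + 1), ∑ a' ∈ Finset.range (d + 1),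
            auxP d q a * (starRingEnd ℂ) (auxP d p a') * s (a + 0) (1 + a'))
        + (∑ a ∈ Finset.range (d + 1), ∑ a' ∈ Finset.range (d + 1),
            auxP d q a * (starRingEnd ℂ) (auxP d q a') * s (a + 1) (1 + a')) := by
    rw [hSdef]
    rw [Finset.sum_product]
    simp only [Finset.sum_product, Finset.sum_range_succ, Finset.sum_range_zero, zero_add,
      Finset.sum_add_distrib, auxF_zero, auxF_one]
    ring
  -- identify the four blocks
  have hB00 : (∑ a ∈ Finset.range (d + 1), ∑ a' ∈ Finset.range (d + 1),
        auxP d p a * (starRingEnd ℂ) (auxP d p a') * s (a + 0) (0 + a'))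
      = momForm (d + 1) s p p := by
    rw [← finrange2 (fun a a' => auxP d p a * (starRingEnd ℂ) (auxP d p a') * s (a + 0) (0 + a'))]
    unfold momForm
    refine Finset.sum_congr rfl fun j _ => Finset.sum_congr rfl fun k _ => ?_
    simp [auxP_coe]
  have hB01 : (∑ a ∈ Finset.range (d + 1), ∑ a' ∈ Finset.range (d + 1),
        auxP d p a * (starRingEnd ℂ) (auxP d q a') * s (a + 1) (0 + a')) = A := by
    rw [hAdef, hM p q]
    rw [← finrange2 (fun a a' => auxP d p a * (starRingEnd ℂ) (auxP d q a') * s (a + 1) (0 + a'))]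
    refine Finset.sum_congr rfl fun j _ => Finset.sum_congr rfl fun k _ => ?_
    simp [auxP_coe]
  have hB10 : (∑ a ∈ Finset.range (d + 1), ∑ a' ∈ Finset.range (d + 1),
        auxP d q a * (starRingEnd ℂ) (auxP d p a') * s (a + 0) (1 + a'))
      = (starRingEnd ℂ) A := by
    rw [hconjA]
    refine Finset.sum_congr rfl fun a _ => Finset.sum_congr rfl fun a' _ => ?_
    rw [Nat.add_zero, Nat.add_comm 1 a']
  have hB11 : (∑ a ∈ Finset.range (d + 1), ∑ a' ∈ Finset.range (d + 1),
        auxP d q a * (starRingEnd ℂ) (auxP d q a') * s (a + 1) (1 + a'))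
      = momForm (d + 1) s Sh Sh := by
    rw [keyShSh]
    rw [← finrange2 (fun a a' => auxP d q a * (starRingEnd ℂ) (auxP d q a') * s (a + 1) (1 + a'))]
    refine Finset.sum_congr rfl fun j _ => Finset.sum_congr rfl fun k _ => ?_
    simp [auxP_coe, Nat.add_comm]
  -- put everything together
  have hdecomp : sqForm (d + 1) s (auxF d p q)
      = momForm (d + 1) s p p + A + (starRingEnd ℂ) A + momForm (d + 1) s Sh Sh := by
    rw [step1, step2, hB00, hB01, hB10, hB11]
  have hpos := hrsq (auxF d p q)
  rw [hdecomp] at hpos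
  have hre : (momForm (d + 1) s p p + A + (starRingEnd ℂ) A + momForm (d + 1) s Sh Sh).re
      = (momForm (d + 1) s p p).re + (momForm (d + 1) s Sh Sh).re + 2 * A.re := by
    simp [Complex.add_re, Complex.conj_re]
    ring
  rw [hre] at hpos
  rw [hMq]
  rw [hAdef] at hpos
  linarith
end
end
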